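/- Explicit form of the FF^PD_g Finslerian metric tensor: for every y ∈ ℝ^N with q(y) > 0, the function y ↦ K(y)²/2 is twice differentiable at y and its second derivative, as a symmetric bilinear form, is given for tangent vectors w₁, w₂ by G_y(w₁,w₂) = (K(y)²/B(y))·[ ⟨w₁,w₂⟩ + (g/B(y))·( q(y)·(b(y)+g·q(y))·⟨b,w₁⟩⟨b,w₂⟩ + q(y)·(⟨b,w₁⟩⟨v(y),w₂⟩ + ⟨b,w₂⟩⟨v(y),w₁⟩) − (b(y)/q(y))·⟨v(y),w₁⟩⟨v(y),w₂⟩ ) ]. -/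

import Mathlib

/-!
Everything is a function of `t = ⟨b, y⟩` and `q = q(y)`, with `dt = ⟨b, ·⟩` and
`dq = ⟨v(y), ·⟩ / q`. Writing `K² = B · exp(-g χ)`, the derivative of the angle is
`dχ = (t dq - q dt) / B`, because `A/√B = cos(h χ)` and `√(B - A²) = h q`. In
`d(K²/2) = exp(-g χ) (dB - g B dχ) / 2` the term `g t dq` of `dB` cancels, leaving
`d(K²/2) = exp(-g χ) ((t + g q) ⟨b, ·⟩ + ⟨v(y), ·⟩)`. One more differentiation, with
`⟨v(w₁), w₂⟩ = ⟨w₁, w₂⟩ - ⟨b, w₁⟩⟨b, w₂⟩`, gives the metric tensor.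
-/

noncomputable section

open Real
open scoped RealInnerProductSpace

/-- The parameter `h = sqrt(1 - g^2/4)`. -/
def hpar (g : ℝ) : ℝ := Real.sqrt (1 - g ^ 2 / 4)

variable {N : ℕ}

/-- `v(y) = y - ⟨b,y⟩ b`, the part of `y` orthogonal to the unit axis vector `b`. -/
def vv (b y : EuclideanSpace ℝ (Fin N)) : EuclideanSpace ℝ (Fin N) := y - (inner ℝ b y : ℝ) • b

/-- `q(y) = ‖v(y)‖`. -/
def qq (b y : EuclideanSpace ℝ (Fin N)) : ℝ := ‖vv b y‖

/-- `A(y) = ⟨b,y⟩ + (g/2) q(y)`. -/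
def AA (g : ℝ) (b y : EuclideanSpace ℝ (Fin N)) : ℝ := (inner ℝ b y : ℝ) + g / 2 * qq b y

/-- `B(y) = ⟨b,y⟩² + g ⟨b,y⟩ q(y) + q(y)²`. -/
def BB (g : ℝ) (b y : EuclideanSpace ℝ (Fin N)) : ℝ :=
  (inner ℝ b y : ℝ) ^ 2 + g * (inner ℝ b y : ℝ) * qq b y + qq b y ^ 2

/-- The azimuthal angle `χ(y) = (1/h) arccos (A(y)/√B(y))`. -/
def chi (g : ℝ) (b y : EuclideanSpace ℝ (Fin N)) : ℝ :=
  1 / hpar g * Real.arccos (AA g b y / Real.sqrt (BB g b y))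

/-- `J(y) = exp(-(g/2) χ(y))`. -/
def JJ (g : ℝ) (b y : EuclideanSpace ℝ (Fin N)) : ℝ := Real.exp (-(g / 2) * chi g b y)

/-- The Finsleroid metric function `K(y) = √B(y) · J(y)`. -/
def KK (g : ℝ) (b y : EuclideanSpace ℝ (Fin N)) : ℝ := Real.sqrt (BB g b y) * JJ g b y

/-- The Ka-transformation `ζ(y) = (K(y)^h/√B(y)) (h v(y) + A(y) b)`. -/
def zeta (g : ℝ) (b y : EuclideanSpace ℝ (Fin N)) : EuclideanSpace ℝ (Fin N) :=
  (KK g b y ^ hpar g / Real.sqrt (BB g b y)) • (hpar g • vv b y + AA g b y • b)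

-- `innerSL ℝ` is typed as a conjugate-linear map, so it cannot be added to `ℝ`-bilinear maps.
def innerBilinCLM {F : Type*} [NormedAddCommGroup F] [InnerProductSpace ℝ F] :
    F →L[ℝ] F →L[ℝ] ℝ :=
  (isBoundedBilinearMap_inner (𝕜 := ℝ)).toContinuousLinearMap

@[simp] lemma innerBilinCLM_apply {F : Type*} [NormedAddCommGroup F] [InnerProductSpace ℝ F]
    (x y : F) : innerBilinCLM x y = ⟪x, y⟫ :=
  rfl

section

variable {g : ℝ} {b : EuclideanSpace ℝ (Fin N)}

def vvCLM (b : EuclideanSpace ℝ (Fin N)) :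
    EuclideanSpace ℝ (Fin N) →L[ℝ] EuclideanSpace ℝ (Fin N) :=
  ContinuousLinearMap.id ℝ _ - (innerSL ℝ b).smulRight b

@[simp] lemma vvCLM_apply (z : EuclideanSpace ℝ (Fin N)) : vvCLM b z = vv b z := by
  simp [vvCLM, vv]

lemma inner_vv_left (x w : EuclideanSpace ℝ (Fin N)) :
    ⟪vv b x, w⟫ = ⟪x, w⟫ - ⟪b, x⟫ * ⟪b, w⟫ := by
  rw [vv, inner_sub_left, real_inner_smul_left]

lemma inner_vv_b_eq_zero (hb : ‖b‖ = 1) (x : EuclideanSpace ℝ (Fin N)) :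
    ⟪vv b x, b⟫ = 0 := by
  rw [inner_vv_left, real_inner_self_eq_norm_sq, hb, real_inner_comm]
  ring

lemma inner_vv_vv (hb : ‖b‖ = 1) (x w : EuclideanSpace ℝ (Fin N)) :
    ⟪vv b x, vv b w⟫ = ⟪vv b x, w⟫ := by
  nth_rw 2 [vv]
  rw [inner_sub_right, real_inner_smul_right, inner_vv_b_eq_zero hb, mul_zero, sub_zero]

lemma continuous_qq : Continuous (qq b) :=
  (vvCLM b).continuous.norm

lemma hasFDerivAt_qq (hb : ‖b‖ = 1) {y : EuclideanSpace ℝ (Fin N)} (hq : 0 < qq b y) :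
    HasFDerivAt (qq b) ((qq b y)⁻¹ • innerSL ℝ (vv b y)) y := by
  have hsq : HasFDerivAt (fun z => ‖vv b z‖ ^ 2)
      (2 • (innerSL ℝ (vv b y)).comp (vvCLM b)) y := by
    simpa using (vvCLM b).hasFDerivAt.norm_sq
  have hsqrt := hsq.sqrt (pow_ne_zero 2 hq.ne')
  simp only [sqrt_sq (norm_nonneg _)] at hsqrt
  refine hsqrt.congr_fderiv (ContinuousLinearMap.ext fun w => ?_)
  simp only [smul_apply, ContinuousLinearMap.comp_apply, vvCLM_apply, coe_innerSL_apply,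
    inner_vv_vv hb, nsmul_eq_mul, Nat.cast_ofNat, smul_eq_mul, show ‖vv b y‖ = qq b y from rfl]
  field_simp

lemma hpar_sq (hg1 : -2 < g) (hg2 : g < 2) : hpar g ^ 2 = 1 - g ^ 2 / 4 :=
  sq_sqrt (by nlinarith)

lemma hpar_pos (hg1 : -2 < g) (hg2 : g < 2) : 0 < hpar g :=
  sqrt_pos.mpr (by nlinarith)

lemma BB_eq_AA_sq_add (y : EuclideanSpace ℝ (Fin N)) :
    BB g b y = AA g b y ^ 2 + (1 - g ^ 2 / 4) * qq b y ^ 2 := by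
  rw [BB, AA]; ring

lemma BB_nonneg (hg1 : -2 < g) (hg2 : g < 2) (y : EuclideanSpace ℝ (Fin N)) : 0 ≤ BB g b y := by
  rw [BB_eq_AA_sq_add, ← hpar_sq hg1 hg2]; positivity

lemma BB_pos (hg1 : -2 < g) (hg2 : g < 2) {y : EuclideanSpace ℝ (Fin N)} (hq : 0 < qq b y) :
    0 < BB g b y := by
  have := hpar_pos hg1 hg2
  rw [BB_eq_AA_sq_add, ← hpar_sq hg1 hg2]; positivity

lemma abs_AA_div_sqrt_BB_lt_one (hg1 : -2 < g) (hg2 : g < 2) {y : EuclideanSpace ℝ (Fin N)}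
    (hq : 0 < qq b y) : |AA g b y / √(BB g b y)| < 1 := by
  have hB := BB_pos hg1 hg2 hq
  have := hpar_pos hg1 hg2
  rw [abs_div, abs_of_pos (sqrt_pos.mpr hB), div_lt_one (sqrt_pos.mpr hB), ← sqrt_sq_eq_abs]
  refine sqrt_lt_sqrt (sq_nonneg _) ?_
  rw [BB_eq_AA_sq_add, ← hpar_sq hg1 hg2]
  linarith [show 0 < hpar g ^ 2 * qq b y ^ 2 by positivity]

lemma sqrt_one_sub_AA_div_sqrt_BB_sq (hg1 : -2 < g) (hg2 : g < 2) {y : EuclideanSpace ℝ (Fin N)}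
    (hq : 0 < qq b y) :
    √(1 - (AA g b y / √(BB g b y)) ^ 2) = hpar g * qq b y / √(BB g b y) := by
  have hB := BB_pos hg1 hg2 hq
  have := hpar_pos hg1 hg2
  rw [← sqrt_sq (by positivity : 0 ≤ hpar g * qq b y / √(BB g b y))]
  congr 1
  rw [div_pow, div_pow, sq_sqrt hB.le, one_sub_div hB.ne', mul_pow, hpar_sq hg1 hg2]
  congr 1
  rw [BB_eq_AA_sq_add]
  ring

lemma hasFDerivAt_AA (hb : ‖b‖ = 1) {y : EuclideanSpace ℝ (Fin N)} (hq : 0 < qq b y) :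
    HasFDerivAt (AA g b) (innerSL ℝ b + (g / 2 / qq b y) • innerSL ℝ (vv b y)) y := by
  refine ((innerSL ℝ b).hasFDerivAt.add
    ((hasFDerivAt_qq hb hq).const_mul (g / 2))).congr_fderiv ?_
  ext w
  simp only [add_apply, smul_apply, coe_innerSL_apply, smul_eq_mul]
  field_simp

lemma hasFDerivAt_BB (hb : ‖b‖ = 1) {y : EuclideanSpace ℝ (Fin N)} (hq : 0 < qq b y) :
    HasFDerivAt (BB g b)
      ((2 * ⟪b, y⟫ + g * qq b y) • innerSL ℝ b
        + ((g * ⟪b, y⟫ + 2 * qq b y) / qq b y) • innerSL ℝ (vv b y)) y := by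
  have ht := (innerSL ℝ b).hasFDerivAt (x := y)
  have hqd := hasFDerivAt_qq hb hq
  refine (((ht.pow 2).add ((ht.const_mul g).mul hqd)).add (hqd.pow 2)).congr_fderiv ?_
  ext w
  simp only [add_apply, smul_apply, coe_innerSL_apply, smul_eq_mul, Nat.add_one_sub_one, pow_one]
  field_simp
  ring

lemma hasFDerivAt_AA_div_sqrt_BB (hg1 : -2 < g) (hg2 : g < 2) (hb : ‖b‖ = 1)
    {y : EuclideanSpace ℝ (Fin N)} (hq : 0 < qq b y) :
    HasFDerivAt (fun z => AA g b z / √(BB g b z))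
      ((hpar g ^ 2 * qq b y / (BB g b y * √(BB g b y))) •
        (qq b y • innerSL ℝ b - (⟪b, y⟫ / qq b y) • innerSL ℝ (vv b y))) y := by
  have hB := BB_pos hg1 hg2 hq
  have hs := sqrt_pos.mpr hB
  have hinv := (hasDerivAt_inv hs.ne').comp_hasFDerivAt y
    ((hasFDerivAt_BB (g := g) hb hq).sqrt hB.ne')
  refine ((hasFDerivAt_AA hb hq).mul hinv).congr_fderiv ?_
  ext w
  simp only [Function.comp_apply, add_apply, sub_apply, smul_apply, coe_innerSL_apply,
    smul_eq_mul, sq_sqrt hB.le, hpar_sq hg1 hg2]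
  field_simp
  rw [BB, AA]
  ring

lemma hasFDerivAt_chi (hg1 : -2 < g) (hg2 : g < 2) (hb : ‖b‖ = 1)
    {y : EuclideanSpace ℝ (Fin N)} (hq : 0 < qq b y) :
    HasFDerivAt (chi g b)
      ((-(qq b y / BB g b y)) • innerSL ℝ b
        + (⟪b, y⟫ / (qq b y * BB g b y)) • innerSL ℝ (vv b y)) y := by
  have hB := BB_pos hg1 hg2 hq
  have hh := hpar_pos hg1 hg2
  obtain ⟨hu₁, hu₂⟩ := abs_lt.mp (abs_AA_div_sqrt_BB_lt_one hg1 hg2 hq)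
  have harccos := ((hasDerivAt_arccos hu₁.ne' hu₂.ne).comp_hasFDerivAt y
    (hasFDerivAt_AA_div_sqrt_BB hg1 hg2 hb hq)).const_mul (1 / hpar g)
  refine harccos.congr_fderiv ?_
  ext w
  simp only [add_apply, sub_apply, smul_apply, coe_innerSL_apply, smul_eq_mul,
    sqrt_one_sub_AA_div_sqrt_BB_sq hg1 hg2 hq]
  field_simp
  ring

lemma KK_sq (hg1 : -2 < g) (hg2 : g < 2) (y : EuclideanSpace ℝ (Fin N)) :
    KK g b y ^ 2 = BB g b y * exp (-g * chi g b y) := by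
  rw [KK, JJ, mul_pow, sq_sqrt (BB_nonneg hg1 hg2 y), ← exp_nat_mul]
  ring_nf

def halfKKSqDeriv (g : ℝ) (b y : EuclideanSpace ℝ (Fin N)) :
    EuclideanSpace ℝ (Fin N) →L[ℝ] ℝ :=
  exp (-g * chi g b y) • ((⟪b, y⟫ + g * qq b y) • innerSL ℝ b + innerSL ℝ (vv b y))

lemma hasFDerivAt_half_KK_sq (hg1 : -2 < g) (hg2 : g < 2) (hb : ‖b‖ = 1)
    {y : EuclideanSpace ℝ (Fin N)} (hq : 0 < qq b y) :
    HasFDerivAt (fun z => KK g b z ^ 2 / 2) (halfKKSqDeriv g b y) y := by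
  have hB := BB_pos hg1 hg2 hq
  simp only [KK_sq hg1 hg2]
  refine (((hasFDerivAt_BB (g := g) hb hq).mul
    ((hasFDerivAt_chi hg1 hg2 hb hq).const_mul (-g)).exp).mul_const 2⁻¹).congr_fderiv ?_
  ext w
  simp only [halfKKSqDeriv, add_apply, smul_apply, coe_innerSL_apply, smul_eq_mul]
  field_simp
  ring

def finslerMetric (g : ℝ) (b y : EuclideanSpace ℝ (Fin N)) :
    EuclideanSpace ℝ (Fin N) →L[ℝ] EuclideanSpace ℝ (Fin N) →L[ℝ] ℝ :=
  (KK g b y ^ 2 / BB g b y) • (innerBilinCLM + (g / BB g b y) •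
    ((qq b y * (⟪b, y⟫ + g * qq b y)) • (innerSL ℝ b).smulRight (innerSL ℝ b)
      + qq b y • ((innerSL ℝ b).smulRight (innerSL ℝ (vv b y))
        + (innerSL ℝ (vv b y)).smulRight (innerSL ℝ b))
      - (⟪b, y⟫ / qq b y) • (innerSL ℝ (vv b y)).smulRight (innerSL ℝ (vv b y))))

lemma finslerMetric_apply (y w₁ w₂ : EuclideanSpace ℝ (Fin N)) :
    finslerMetric g b y w₁ w₂ =
      KK g b y ^ 2 / BB g b y *
        (⟪w₁, w₂⟫ + g / BB g b y *
          (qq b y * (⟪b, y⟫ + g * qq b y) * ⟪b, w₁⟫ * ⟪b, w₂⟫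
            + qq b y * (⟪b, w₁⟫ * ⟪vv b y, w₂⟫ + ⟪b, w₂⟫ * ⟪vv b y, w₁⟫)
            - ⟪b, y⟫ / qq b y * ⟪vv b y, w₁⟫ * ⟪vv b y, w₂⟫)) := by
  simp only [finslerMetric, add_apply, sub_apply,
    smul_apply, ContinuousLinearMap.smulRight_apply, innerSL_apply_apply,
    innerBilinCLM_apply, smul_eq_mul]
  ring

lemma hasFDerivAt_halfKKSqDeriv (hg1 : -2 < g) (hg2 : g < 2) (hb : ‖b‖ = 1)
    {y : EuclideanSpace ℝ (Fin N)} (hq : 0 < qq b y) :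
    HasFDerivAt (halfKKSqDeriv g b) (finslerMetric g b y) y := by
  have hB := BB_pos hg1 hg2 hq
  have hexp := ((hasFDerivAt_chi hg1 hg2 hb hq).const_mul (-g)).exp
  have hcoeff := (innerSL ℝ b).hasFDerivAt.add ((hasFDerivAt_qq hb hq).const_mul g)
  have hform := (hcoeff.smul_const (innerSL ℝ b)).add
    ((innerBilinCLM.comp (vvCLM b)).hasFDerivAt (x := y))
  refine (hexp.smul hform).congr_fderiv ?_
  ext w₁ w₂
  rw [finslerMetric_apply, KK_sq hg1 hg2]
  simp only [Pi.add_apply, add_apply, smul_apply, ContinuousLinearMap.comp_apply,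
    ContinuousLinearMap.smulRight_apply, coe_innerSL_apply, vvCLM_apply, innerBilinCLM_apply,
    smul_eq_mul, inner_vv_left w₁]
  field_simp
  rw [BB]
  ring

end

theorem stmt11_general (N : ℕ) (g : ℝ) (hg1 : -2 < g) (hg2 : g < 2)
    (b : EuclideanSpace ℝ (Fin N)) (hb : ‖b‖ = 1)
    (y : EuclideanSpace ℝ (Fin N)) (hq : 0 < qq b y) :
    DifferentiableAt ℝ (fun z => KK g b z ^ 2 / 2) y ∧
    DifferentiableAt ℝ (fderiv ℝ (fun z => KK g b z ^ 2 / 2)) y ∧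
    ∀ w₁ w₂ : EuclideanSpace ℝ (Fin N),
      fderiv ℝ (fderiv ℝ (fun z => KK g b z ^ 2 / 2)) y w₁ w₂ =
        KK g b y ^ 2 / BB g b y *
          ((inner ℝ w₁ w₂ : ℝ) + g / BB g b y *
            (qq b y * ((inner ℝ b y : ℝ) + g * qq b y) * (inner ℝ b w₁ : ℝ) * (inner ℝ b w₂ : ℝ)
              + qq b y * ((inner ℝ b w₁ : ℝ) * (inner ℝ (vv b y) w₂ : ℝ) + (inner ℝ b w₂ : ℝ) * (inner ℝ (vv b y) w₁ : ℝ))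
              - (inner ℝ b y : ℝ) / qq b y * (inner ℝ (vv b y) w₁ : ℝ) * (inner ℝ (vv b y) w₂ : ℝ))) := by
  have hfderiv : fderiv ℝ (fun z => KK g b z ^ 2 / 2) =ᶠ[nhds y] halfKKSqDeriv g b := by
    filter_upwards [continuousAt_const.eventually_lt continuous_qq.continuousAt hq] with z hz
    exact (hasFDerivAt_half_KK_sq hg1 hg2 hb hz).fderiv
  have hsecond := (hasFDerivAt_halfKKSqDeriv hg1 hg2 hb hq).congr_of_eventuallyEq hfderiv
  refine ⟨(hasFDerivAt_half_KK_sq hg1 hg2 hb hq).differentiableAt, hsecond.differentiableAt,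
    fun w₁ w₂ => ?_⟩
  rw [hsecond.fderiv, finslerMetric_apply]

theorem stmt11 (N : ℕ) (hN : 2 ≤ N) (g : ℝ) (hg1 : -2 < g) (hg2 : g < 2)
    (b : EuclideanSpace ℝ (Fin N)) (hb : ‖b‖ = 1)
    (y : EuclideanSpace ℝ (Fin N)) (hq : 0 < qq b y) :
    DifferentiableAt ℝ (fun z => KK g b z ^ 2 / 2) y ∧
    DifferentiableAt ℝ (fderiv ℝ (fun z => KK g b z ^ 2 / 2)) y ∧
    ∀ w₁ w₂ : EuclideanSpace ℝ (Fin N),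
      fderiv ℝ (fderiv ℝ (fun z => KK g b z ^ 2 / 2)) y w₁ w₂ =
        KK g b y ^ 2 / BB g b y *
          ((inner ℝ w₁ w₂ : ℝ) + g / BB g b y *
            (qq b y * ((inner ℝ b y : ℝ) + g * qq b y) * (inner ℝ b w₁ : ℝ) * (inner ℝ b w₂ : ℝ)
              + qq b y * ((inner ℝ b w₁ : ℝ) * (inner ℝ (vv b y) w₂ : ℝ) + (inner ℝ b w₂ : ℝ) * (inner ℝ (vv b y) w₁ : ℝ))
              - (inner ℝ b y : ℝ) / qq b y * (inner ℝ (vv b y) w₁ : ℝ) * (inner ℝ (vv b y) w₂ : ℝ))) :=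
  stmt11_general N g hg1 hg2 b hb y hq
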